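/- Let n ≥ 2 and let v : ZMod 5 → EuclideanSpace ℝ (Fin n) be the vertices of a simple closed polygon with 5 vertices (a piecewise geodesic Jordan curve Γ₅ in ℝⁿ). Then the total curvature of Γ₅, namely Σ_{i=0}^{4} angle(v_{i+1} − v_i, v_{i+2} − v_{i+1}) with indices mod 5, is strictly less than 4π. -/

import Mathlib

open Real InnerProductGeometry

/-- A closed polygon with vertices `v i` (indices cyclic, consecutive vertices distinct)
is simple (a piecewise geodesic Jordan curve) if any two consecutive edges meet exactly
in their common vertex and any two non-consecutive edges are disjoint. -/
def IsSimpleClosedPolygon {k n : ℕ} (v : ZMod k → EuclideanSpace ℝ (Fin n)) : Prop :=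
  (∀ i, v (i + 1) ≠ v i) ∧
  (∀ i, segment ℝ (v i) (v (i + 1)) ∩ segment ℝ (v (i + 1)) (v (i + 2)) = {v (i + 1)}) ∧
  (∀ i j, i ≠ j → i + 1 ≠ j → i ≠ j + 1 →
    Disjoint (segment ℝ (v i) (v (i + 1))) (segment ℝ (v j) (v (j + 1))))

/-!
Let `aᵢ` be the exterior angles and `uᵢ` the unit edge directions of the pentagon. The
alternately reversed directions `u₀, -u₁, u₂, -u₃, u₄, -u₀` make consecutive angles `π - aᵢ`, so
the triangle inequality for angles gives `∑ (π - aᵢ) ≥ ∠(u₀, -u₀) = π`, i.e. the total curvature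
is at most `4π`. If it is `4π`, equality in all these triangle inequalities puts the six vectors
in order on a half great circle: the pentagon is planar and turns left by `aᵢ` at every vertex,
with `aᵢ + aᵢ₊₁ > π` because each `aᵢ < π` (simplicity). Such a pentagon winds twice around,
like a pentagram, and comparing signs of `2 × 2` determinants of its edges (with one Plücker
relation) shows that some edges `i` and `i + 2` cross.
-/

open Finset NormedSpace
open scoped RealInnerProductSpace

lemma sum_zmod_five_eq {M : Type*} [AddCommMonoid M] (f : ZMod 5 → M) (i : ZMod 5) :
    ∑ j, f j = f i + f (i + 1) + f (i + 2) + f (i + 3) + f (i + 4) := by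
  have h5 (g : ZMod 5 → M) : ∑ j, g j = g 0 + g 1 + g 2 + g 3 + g 4 := Fin.sum_univ_five g
  rw [← Equiv.sum_comp (Equiv.addLeft i), h5]
  simp only [Equiv.coe_addLeft, add_zero]

lemma sum_range_five_natCast_add {M : Type*} [AddCommMonoid M] (f : ZMod 5 → M) (j : ℕ) :
    ∑ x ∈ range 5, f ((j + x : ℕ) : ZMod 5) = ∑ i, f i := by
  rw [sum_zmod_five_eq f j]
  simp [sum_range_succ, add_assoc]

def wedge (x y : ℝ × ℝ) : ℝ := x.1 * y.2 - x.2 * y.1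

lemma wedge_swap (x y : ℝ × ℝ) : wedge y x = -wedge x y := by
  unfold wedge; ring

lemma wedge_self (x : ℝ × ℝ) : wedge x x = 0 := by
  unfold wedge; ring

lemma wedge_add_left (x y z : ℝ × ℝ) : wedge (x + y) z = wedge x z + wedge y z := by
  simp only [wedge, Prod.fst_add, Prod.snd_add]; ring

lemma wedge_add_right (x y z : ℝ × ℝ) : wedge x (y + z) = wedge x y + wedge x z := by
  simp only [wedge, Prod.fst_add, Prod.snd_add]; ring

lemma wedge_mul_wedge_sub_wedge_mul_wedge (a b c d : ℝ × ℝ) :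
    wedge a c * wedge b d - wedge a d * wedge b c = wedge a b * wedge c d := by
  unfold wedge; ring

lemma wedge_smul_cos_sin (r s a b : ℝ) :
    wedge (r • (cos a, sin a)) (s • (cos b, sin b)) = r * s * sin (b - a) := by
  simp only [wedge, Prod.smul_mk, smul_eq_mul, sin_sub]; ring

lemma wedge_div_smul_sub_wedge_div_smul {r q : ℝ × ℝ} (hrq : wedge r q ≠ 0) (w : ℝ × ℝ) :
    (wedge w q / wedge r q) • r - (wedge w r / wedge r q) • q = w := by
  have h : wedge w q • r - wedge w r • q = wedge r q • w := by
    ext <;> simp only [wedge, Prod.fst_sub, Prod.snd_sub, Prod.smul_fst, Prod.smul_snd,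
      smul_eq_mul] <;> ring
  rw [div_eq_inv_mul, div_eq_inv_mul, mul_smul, mul_smul, ← smul_sub, h, inv_smul_smul₀ hrq]

lemma not_disjoint_segment_of_wedge {W : Type*} [AddCommGroup W] [Module ℝ W]
    (L : ℝ × ℝ →ₗ[ℝ] W) {A B C D : W} {r q w : ℝ × ℝ}
    (hr : B - A = L r) (hq : D - C = L q) (hw : C - A = L w) (hrq : wedge r q ≠ 0)
    (hs : wedge w q / wedge r q ∈ Set.Icc (0 : ℝ) 1)
    (ht : wedge w r / wedge r q ∈ Set.Icc (0 : ℝ) 1) :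
    ¬Disjoint (segment ℝ A B) (segment ℝ C D) := by
  have hL : L ((wedge w q / wedge r q) • r) - L ((wedge w r / wedge r q) • q) = C - A := by
    rw [← map_sub, wedge_div_smul_sub_wedge_div_smul hrq, hw]
  have hpt : C + (wedge w r / wedge r q) • (D - C) = A + (wedge w q / wedge r q) • (B - A) := by
    rw [hr, hq, ← map_smul, ← map_smul, add_comm A, ← sub_eq_sub_iff_add_eq_add, hL]
  rw [Set.not_disjoint_iff, segment_eq_image', segment_eq_image']
  exact ⟨_, ⟨_, hs, rfl⟩, ⟨_, ht, hpt⟩⟩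

/-- Edge vectors of a closed plane pentagon that turns left by less than `π` at every vertex but
by more than `π` over any two consecutive vertices. -/
structure IsPentagramEdges (e : ZMod 5 → ℝ × ℝ) : Prop where
  sum_eq_zero : ∑ i, e i = 0
  wedge_add_one_pos : ∀ i, 0 < wedge (e i) (e (i + 1))
  wedge_add_two_neg : ∀ i, wedge (e i) (e (i + 2)) < 0

namespace IsPentagramEdges

variable {e : ZMod 5 → ℝ × ℝ}

lemma add_eq_zero (he : IsPentagramEdges e) (i : ZMod 5) :
    e i + e (i + 1) + e (i + 2) + e (i + 3) + e (i + 4) = 0 :=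
  sum_zmod_five_eq e i ▸ he.sum_eq_zero

lemma wedge_add_four_neg (he : IsPentagramEdges e) (i : ZMod 5) :
    wedge (e i) (e (i + 4)) < 0 := by
  have := he.wedge_add_one_pos (i + 4)
  rw [show i + 4 + 1 = i by grind, wedge_swap] at this
  linarith

lemma wedge_neg_or_wedge_neg (he : IsPentagramEdges e) (i : ZMod 5) :
    wedge (e i) (e (i + 1) + e (i + 2)) < 0 ∨ wedge (e (i + 2)) (e (i + 3) + e (i + 4)) < 0 := by
  by_contra! h
  have h02 := he.wedge_add_two_neg i
  have h04 := he.wedge_add_four_neg i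
  have h24 := he.wedge_add_two_neg (i + 2)
  have h34 := he.wedge_add_one_pos (i + 3)
  rw [add_assoc, show (2 + 2 : ZMod 5) = 4 by norm_num] at h24
  rw [add_assoc, show (3 + 1 : ZMod 5) = 4 by norm_num] at h34
  have hsum : wedge (e i) (e i + e (i + 1) + e (i + 2) + e (i + 3) + e (i + 4)) = 0 := by
    rw [he.add_eq_zero]; simp [wedge]
  simp only [wedge_add_right, wedge_self] at h hsum
  have h0 : wedge (e i) (e (i + 3)) ≤ -wedge (e i) (e (i + 4)) := by linarith
  have h2 : -wedge (e (i + 2)) (e (i + 4)) ≤ wedge (e (i + 2)) (e (i + 3)) := by linarith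
  nlinarith [wedge_mul_wedge_sub_wedge_mul_wedge (e i) (e (i + 2)) (e (i + 3)) (e (i + 4)),
    mul_le_mul_of_nonpos_right h0 h24.le, mul_le_mul_of_nonpos_left h2 h04.le,
    mul_neg_of_neg_of_pos h02 h34]

/-- For the polygon with edges `e`, the first inequality says that the vertices `v (i + 2)`,
`v (i + 3)` lie on opposite sides of the line through edge `i`, the second that `v i`, `v (i + 1)`
lie on opposite sides of the line through edge `i + 2`. -/
lemma exists_wedge_neg (he : IsPentagramEdges e) :
    ∃ i, wedge (e i) (e (i + 1) + e (i + 2)) < 0 ∧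
      wedge (e (i + 2)) (e (i + 3) + e (i + 4)) < 0 := by
  set P : ZMod 5 → Prop := fun i => wedge (e i) (e (i + 1) + e (i + 2)) < 0
  have hP : ∀ i, P i ∨ P (i + 2) := fun i => by
    simpa only [P, add_assoc, show (2 + 1 : ZMod 5) = 3 by norm_num,
      show (2 + 2 : ZMod 5) = 4 by norm_num] using he.wedge_neg_or_wedge_neg i
  by_contra! h
  have h' : ∀ i, P i → ¬P (i + 2) := fun i hi => not_lt.2 <| by
    simpa only [P, add_assoc, show (2 + 1 : ZMod 5) = 3 by norm_num,
      show (2 + 2 : ZMod 5) = 4 by norm_num] using h i hi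
  -- `P` would alternate along the cycle `0, 2, 4, 1, 3` of odd length.
  have := hP 0; have := hP 2; have := hP 4; have := h' 0; have := h' 2; have := h' 4
  simp only [show (0 + 2 : ZMod 5) = 2 from rfl, show (2 + 2 : ZMod 5) = 4 from rfl,
    show (4 + 2 : ZMod 5) = 1 from rfl] at *
  have := hP 1; have := h' 1; have := hP 3; have := h' 3
  simp only [show (1 + 2 : ZMod 5) = 3 from rfl, show (3 + 2 : ZMod 5) = 0 from rfl] at *
  tauto

theorem exists_not_disjoint_segment {W : Type*} [AddCommGroup W] [Module ℝ W]
    (he : IsPentagramEdges e) (L : ℝ × ℝ →ₗ[ℝ] W) (v : ZMod 5 → W)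
    (hv : ∀ i, v (i + 1) - v i = L (e i)) :
    ∃ i, ¬Disjoint (segment ℝ (v i) (v (i + 1))) (segment ℝ (v (i + 2)) (v (i + 3))) := by
  obtain ⟨i, hi, hi2⟩ := he.exists_wedge_neg
  have h01 := he.wedge_add_one_pos i
  have h02 := he.wedge_add_two_neg i
  have h12 := he.wedge_add_one_pos (i + 1)
  rw [add_assoc, one_add_one_eq_two] at h12
  have hw : wedge (e i + e (i + 1)) (e (i + 2)) = wedge (e (i + 2)) (e (i + 3) + e (i + 4)) := by
    have : e i + e (i + 1) = -(e (i + 2) + e (i + 3) + e (i + 4)) := by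
      rw [eq_neg_iff_add_eq_zero, ← he.add_eq_zero i]; abel
    rw [this]; simp only [wedge, Prod.fst_add, Prod.snd_add, Prod.fst_neg, Prod.snd_neg]; ring
  refine ⟨i, not_disjoint_segment_of_wedge L (hv i) (q := e (i + 2)) (w := e i + e (i + 1))
    (by rw [← hv, add_assoc, show (2 + 1 : ZMod 5) = 3 by norm_num]) ?_ h02.ne ⟨?_, ?_⟩ ⟨?_, ?_⟩⟩
  · rw [map_add, ← hv, ← hv, add_assoc, one_add_one_eq_two]; abel
  · rw [hw]; exact div_nonneg_of_nonpos hi2.le h02.le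
  · rw [div_le_one_of_neg h02, wedge_add_left]; linarith
  · rw [wedge_add_left, wedge_self, zero_add, wedge_swap (e i)]
    exact div_nonneg_of_nonpos (by linarith) h02.le
  · rw [div_le_one_of_neg h02, wedge_add_left, wedge_self, zero_add, wedge_swap (e i)]
    rw [wedge_add_right] at hi
    linarith

end IsPentagramEdges

theorem isPentagramEdges_of_turning (e : ZMod 5 → ℝ × ℝ) (ρ a : ZMod 5 → ℝ)
    (hsum : ∑ i, e i = 0) (hρ : ∀ i, 0 < ρ i) (ha : ∀ i, a i < π) (h : 4 * π ≤ ∑ i, a i)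
    (he : ∀ k : ℕ, e k = ρ k • (cos (∑ j ∈ range k, a j), sin (∑ j ∈ range k, a j))) :
    IsPentagramEdges e := by
  refine ⟨hsum, fun i => ?_, fun i => ?_⟩ <;> obtain ⟨k, rfl⟩ := ZMod.natCast_zmod_surjective i <;>
    have hrot := sum_zmod_five_eq a k
  · rw [← Nat.cast_succ, he, he, wedge_smul_cos_sin, sum_range_succ, add_sub_cancel_left]
    push_cast
    refine mul_pos (mul_pos (hρ _) (hρ _)) (sin_pos_of_pos_of_lt_pi ?_ (ha k))
    linarith [ha (k + 1), ha (k + 2), ha (k + 3), ha (k + 4)]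
  · rw [show (k : ZMod 5) + 2 = ((k + 2 : ℕ) : ZMod 5) by push_cast; ring, he, he,
      wedge_smul_cos_sin, sum_range_succ, sum_range_succ, add_assoc, add_sub_cancel_left,
      ← sin_sub_two_pi]
    push_cast
    refine mul_neg_of_pos_of_neg (mul_pos (hρ _) (hρ _)) (sin_neg_of_neg_of_neg_pi_lt ?_ ?_)
    · linarith [ha k, ha (k + 1)]
    · linarith [ha (k + 2), ha (k + 3), ha (k + 4)]

section InnerProductSpace

variable {V : Type*} [NormedAddCommGroup V] [InnerProductSpace ℝ V]

lemma eq_inner_smul_add_inner_smul {x f z : V} (hx : ‖x‖ = 1) (hf : ‖f‖ = 1) (hxf : ⟪x, f⟫ = 0)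
    (hz : ‖z‖ = 1) (h : ⟪x, z⟫ ^ 2 + ⟪f, z⟫ ^ 2 = 1) : z = ⟪x, z⟫ • x + ⟪f, z⟫ • f := by
  rw [← sub_eq_zero, ← inner_self_eq_zero (𝕜 := ℝ)]
  simp only [inner_sub_left, inner_sub_right, inner_add_left, inner_add_right,
    real_inner_smul_left, real_inner_smul_right, real_inner_comm x f, real_inner_comm x z,
    real_inner_comm f z, inner_self_eq_one_of_norm_eq_one hx, inner_self_eq_one_of_norm_eq_one hf,
    inner_self_eq_one_of_norm_eq_one hz, hxf]
  linear_combination -h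

lemma exists_eq_cos_angle_smul_add_sin_angle_smul {x y : V} (hx : ‖x‖ = 1) (hy : ‖y‖ = 1)
    (h : sin (angle x y) ≠ 0) :
    ∃ f, ‖f‖ = 1 ∧ ⟪x, f⟫ = 0 ∧ y = cos (angle x y) • x + sin (angle x y) • f := by
  have hxy := inner_eq_cos_angle_of_norm_eq_one hx hy
  set f := (sin (angle x y))⁻¹ • (y - cos (angle x y) • x)
  have hxf : ⟪x, f⟫ = 0 := by
    simp [f, inner_sub_right, real_inner_smul_right, hxy, hx]
  refine ⟨f, ?_, hxf, by simp only [f, smul_inv_smul₀ h]; abel⟩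
  have hsq : ‖y - cos (angle x y) • x‖ ^ 2 = |sin (angle x y)| ^ 2 := by
    rw [sq_abs, ← real_inner_self_eq_norm_sq]
    simp only [inner_sub_left, inner_sub_right, real_inner_smul_left, real_inner_smul_right,
      real_inner_comm x y, hxy, inner_self_eq_one_of_norm_eq_one hx,
      inner_self_eq_one_of_norm_eq_one hy]
    linear_combination -sin_sq_add_cos_sq (angle x y)
  rw [norm_smul, norm_inv, norm_eq_abs, (sq_eq_sq₀ (norm_nonneg _) (abs_nonneg _)).1 hsq,
    inv_mul_cancel₀ (abs_ne_zero.2 h)]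

lemma eq_cos_smul_add_sin_smul_of_angle_eq_add {x f y z : V} {α : ℝ} (hx : ‖x‖ = 1)
    (hf : ‖f‖ = 1) (hxf : ⟪x, f⟫ = 0) (hz : ‖z‖ = 1) (hα : sin α ≠ 0)
    (hy : y = cos α • x + sin α • f) (hxz : angle x z = α + angle y z) :
    z = cos (α + angle y z) • x + sin (α + angle y z) • f := by
  set β := angle y z
  have hfx : ⟪f, x⟫ = 0 := by rwa [real_inner_comm]
  have hyy : ⟪y, y⟫ = 1 := by
    simp only [hy, inner_add_left, inner_add_right, real_inner_smul_left, real_inner_smul_right,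
      inner_self_eq_one_of_norm_eq_one hx, inner_self_eq_one_of_norm_eq_one hf, hxf, hfx]
    linear_combination sin_sq_add_cos_sq α
  have hy1 : ‖y‖ = 1 := by
    rwa [real_inner_self_eq_norm_sq, pow_eq_one_iff_of_nonneg (norm_nonneg _) two_ne_zero] at hyy
  have hxz' : ⟪x, z⟫ = cos (α + β) := by rw [inner_eq_cos_angle_of_norm_eq_one hx hz, hxz]
  have hyz : ⟪y, z⟫ = cos β := inner_eq_cos_angle_of_norm_eq_one hy1 hz
  have hfz : ⟪f, z⟫ = sin (α + β) := by
    rw [hy, inner_add_left, real_inner_smul_left, real_inner_smul_left, hxz'] at hyz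
    refine mul_left_cancel₀ hα ?_
    rw [sin_add, cos_add] at *
    linear_combination hyz - cos β * sin_sq_add_cos_sq α
  rw [← hxz', ← hfz]
  exact eq_inner_smul_add_inner_smul hx hf hxf hz (by rw [hxz', hfz, cos_sq_add_sin_sq])

lemma angle_le_sum_angle {w : ℕ → V} {i j : ℕ} (hi : w i ≠ 0) (hij : i ≤ j) :
    angle (w i) (w j) ≤ ∑ k ∈ Ico i j, angle (w k) (w (k + 1)) := by
  induction j, hij using Nat.le_induction with
  | base => simp [angle_self hi]
  | succ j hij ih =>
    rw [sum_Ico_succ_top hij]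
    linarith [angle_le_angle_add_angle (w i) (w j) (w (j + 1))]

lemma angle_eq_sum_angle_of_sum_angle_le {w : ℕ → V} {m k : ℕ} (hw : ∀ j ≤ m, w j ≠ 0)
    (hle : ∑ j ∈ range m, angle (w j) (w (j + 1)) ≤ angle (w 0) (w m)) (hk : k ≤ m) :
    angle (w 0) (w k) = ∑ j ∈ range k, angle (w j) (w (j + 1)) := by
  have h0k := angle_le_sum_angle (hw 0 (Nat.zero_le m)) (Nat.zero_le k)
  have hkm := angle_le_sum_angle (hw k hk) hk
  rw [← range_eq_Ico] at h0k
  linarith [angle_le_angle_add_angle (w 0) (w k) (w m), sum_range_add_sum_Ico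
    (fun j => angle (w j) (w (j + 1))) hk]

theorem exists_eq_cos_smul_add_sin_smul_of_sum_angle_le {w : ℕ → V} {m : ℕ} (hm : 1 < m)
    (hw : ∀ k ≤ m, ‖w k‖ = 1) (hpos : ∀ k < m, 0 < angle (w k) (w (k + 1)))
    (hle : ∑ k ∈ range m, angle (w k) (w (k + 1)) ≤ angle (w 0) (w m)) :
    ∃ f, ‖f‖ = 1 ∧ ⟪w 0, f⟫ = 0 ∧ ∀ k ≤ m,
      w k = cos (∑ j ∈ range k, angle (w j) (w (j + 1))) • w 0 +
        sin (∑ j ∈ range k, angle (w j) (w (j + 1))) • f := by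
  set β : ℕ → ℝ := fun k => ∑ j ∈ range k, angle (w j) (w (j + 1))
  have hne : ∀ k ≤ m, w k ≠ 0 := fun k hk => norm_ne_zero_iff.1 (by rw [hw k hk]; exact one_ne_zero)
  have hangle : ∀ k ≤ m, angle (w 0) (w k) = β k := fun k hk =>
    angle_eq_sum_angle_of_sum_angle_le hne hle hk
  have hβ : ∀ k, 0 < k → k < m → 0 < β k ∧ β k < π := by
    intro k hk0 hkm
    refine ⟨sum_pos (fun j hj => hpos j (by simp at hj; omega)) (nonempty_range_iff.2 hk0.ne'), ?_⟩
    have hkm' : 0 < ∑ j ∈ Ico k m, angle (w j) (w (j + 1)) :=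
      sum_pos (fun j hj => hpos j (by simp at hj; omega)) (nonempty_Ico.2 hkm)
    linarith [sum_range_add_sum_Ico (fun j => angle (w j) (w (j + 1))) hkm.le,
      angle_le_pi (w 0) (w m), hangle m le_rfl]
  have hβ1 : β 1 = angle (w 0) (w 1) := by simp [β]
  obtain ⟨f, hf, h0f, h1⟩ := exists_eq_cos_angle_smul_add_sin_angle_smul (hw 0 (by omega))
    (hw 1 hm.le) (hβ1 ▸ (sin_pos_of_pos_of_lt_pi (hβ 1 one_pos hm).1 (hβ 1 one_pos hm).2).ne')
  refine ⟨f, hf, h0f, fun k hk => ?_⟩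
  induction k with
  | zero => simp
  | succ k ih =>
    rcases Nat.eq_zero_or_pos k with rfl | hk0
    · rwa [← hβ1] at h1
    · have hk' : angle (w 0) (w (k + 1)) = β k + angle (w k) (w (k + 1)) := by
        rw [hangle (k + 1) hk, ← sum_range_succ]
      rw [sum_range_succ]
      exact eq_cos_smul_add_sin_smul_of_angle_eq_add (hw 0 (by omega)) hf h0f (hw (k + 1) hk)
        (sin_pos_of_pos_of_lt_pi (hβ k hk0 (by omega)).1 (hβ k hk0 (by omega)).2).ne'
        (ih (by omega)) hk'

lemma eq_cos_smul_add_sin_smul_of_sum_eq_four_pi {u : ZMod 5 → V} {a : ZMod 5 → ℝ} {f₁ f₂ : V}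
    (ha : ∑ i, a i = 4 * π)
    (hu : ∀ k : ℕ, k < 5 → u k = cos (∑ j ∈ range k, a j) • f₁ + sin (∑ j ∈ range k, a j) • f₂)
    (k : ℕ) : u k = cos (∑ j ∈ range k, a j) • f₁ + sin (∑ j ∈ range k, a j) • f₂ := by
  induction k using Nat.strong_induction_on with
  | _ k ih =>
  rcases lt_or_ge k 5 with hk | hk
  · exact hu k hk
  · obtain ⟨j, rfl⟩ : ∃ j, k = j + 5 := ⟨k - 5, by omega⟩
    rw [sum_range_add, sum_range_five_natCast_add, ha, Nat.cast_add,
      show ((5 : ℕ) : ZMod 5) = 0 from rfl, add_zero, ih j (by omega),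
      show 4 * π = ((2 : ℕ) : ℝ) * (2 * π) by push_cast; ring, cos_add_nat_mul_two_pi,
      sin_add_nat_mul_two_pi]

theorem exists_orthonormal_normalize_eq_of_four_pi_le (E : ZMod 5 → V) (hE : ∀ i, E i ≠ 0)
    (hlt : ∀ i, angle (E i) (E (i + 1)) < π) (h : 4 * π ≤ ∑ i, angle (E i) (E (i + 1))) :
    ∃ f₁ f₂ : V, ‖f₁‖ = 1 ∧ ‖f₂‖ = 1 ∧ ⟪f₁, f₂⟫ = 0 ∧ ∀ k : ℕ,
      normalize (E k) = cos (∑ j ∈ range k, angle (E j) (E (j + 1))) • f₁ +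
        sin (∑ j ∈ range k, angle (E j) (E (j + 1))) • f₂ := by
  set w : ℕ → V := fun k => (-1 : ℝ) ^ k • normalize (E k)
  have hw (k : ℕ) : ‖w k‖ = 1 := by
    simp [w, norm_smul, norm_normalize_eq_one_iff.2 (hE _)]
  have hwa (k : ℕ) : angle (w k) (w (k + 1)) = π - angle (E k) (E (k + 1)) := by
    rcases neg_one_pow_eq_or ℝ k with hk | hk <;>
      simp [w, hk, pow_succ, angle_neg_right, angle_neg_left, angle_normalize_left,
        angle_normalize_right]
  have hπ : angle (w 0) (w 5) = π := by
    have hw5 : w 5 = -w 0 := by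
      simp only [w, show ((5 : ℕ) : ZMod 5) = 0 from rfl]; norm_num
    rw [hw5, angle_self_neg_of_nonzero (norm_ne_zero_iff.1 (by rw [hw 0]; exact one_ne_zero))]
  have hsum : ∑ k ∈ range 5, angle (w k) (w (k + 1)) = 5 * π - ∑ i, angle (E i) (E (i + 1)) := by
    simp only [hwa, sum_sub_distrib, sum_const, card_range, nsmul_eq_mul]
    rw [← sum_range_five_natCast_add (fun i => angle (E i) (E (i + 1))) 0]
    simp
  obtain ⟨f, hf, h0f, hwk⟩ := exists_eq_cos_smul_add_sin_smul_of_sum_angle_le (m := 5)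
    (by norm_num) (fun k _ => hw k) (fun k _ => by rw [hwa]; linarith [hlt k]) (by linarith)
  have htot : ∑ i, angle (E i) (E (i + 1)) = 4 * π := by
    have := angle_le_sum_angle (w := w) (i := 0) (j := 5) (by simpa [w] using hE 0) (by norm_num)
    rw [← range_eq_Ico, hsum, hπ] at this
    linarith
  have hlt5 (k : ℕ) (hk : k < 5) : normalize (E k) =
      cos (∑ j ∈ range k, angle (E j) (E (j + 1))) • w 0 +
        sin (∑ j ∈ range k, angle (E j) (E (j + 1))) • -f := by
    have hnk : normalize (E k) = (-1 : ℝ) ^ k • w k := by simp [w, smul_smul, ← mul_pow]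
    have hsq : ((-1 : ℝ) ^ k) * (-1) ^ k = 1 := by rw [← mul_pow]; norm_num
    rw [hnk, hwk k hk.le]
    simp only [hwa, sum_sub_distrib, sum_const, card_range, nsmul_eq_mul, cos_nat_mul_pi_sub,
      sin_nat_mul_pi_sub]
    set θ := ∑ x ∈ range k, angle (E x) (E (x + 1))
    match_scalars
    · linear_combination cos θ * hsq
    · linear_combination -sin θ * hsq
  exact ⟨w 0, -f, hw 0, by rwa [norm_neg], by rwa [inner_neg_right, neg_eq_zero],
    eq_cos_smul_add_sin_smul_of_sum_eq_four_pi (u := fun i => normalize (E i))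
      (a := fun i => angle (E i) (E (i + 1))) htot hlt5⟩

theorem exists_linearMap_isPentagramEdges (E : ZMod 5 → V) (hE : ∀ i, E i ≠ 0)
    (hsum : ∑ i, E i = 0) (hlt : ∀ i, angle (E i) (E (i + 1)) < π)
    (h : 4 * π ≤ ∑ i, angle (E i) (E (i + 1))) :
    ∃ (L : ℝ × ℝ →ₗ[ℝ] V) (e : ZMod 5 → ℝ × ℝ), (∀ i, E i = L (e i)) ∧ IsPentagramEdges e := by
  obtain ⟨f₁, f₂, h₁, h₂, h₁₂, hdir⟩ := exists_orthonormal_normalize_eq_of_four_pi_le E hE hlt h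
  let L : ℝ × ℝ →ₗ[ℝ] V :=
    (LinearMap.fst ℝ ℝ ℝ).smulRight f₁ + (LinearMap.snd ℝ ℝ ℝ).smulRight f₂
  let e : ZMod 5 → ℝ × ℝ := fun i => (⟪f₁, E i⟫, ⟪f₂, E i⟫)
  have h₂₁ : ⟪f₂, f₁⟫ = 0 := by rwa [real_inner_comm]
  have hEk (k : ℕ) : E k = ‖E k‖ • (cos (∑ j ∈ range k, angle (E j) (E (j + 1))) • f₁ +
      sin (∑ j ∈ range k, angle (E j) (E (j + 1))) • f₂) := by
    rw [← hdir k, norm_smul_normalize]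
  have he (k : ℕ) : e k = ‖E k‖ • (cos (∑ j ∈ range k, angle (E j) (E (j + 1))),
      sin (∑ j ∈ range k, angle (E j) (E (j + 1)))) := by
    have := hEk k
    generalize ‖E k‖ = ρ at this ⊢
    ext <;> simp [e, this, inner_add_right, real_inner_smul_right, h₁₂, h₂₁, h₁, h₂]
  refine ⟨L, e, fun i => ?_, isPentagramEdges_of_turning e (fun i => ‖E i‖) _ ?_
    (fun i => norm_pos_iff.2 (hE i)) hlt h he⟩
  · obtain ⟨k, rfl⟩ := ZMod.natCast_zmod_surjective i
    rw [he k]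
    have := hEk k
    generalize ‖E k‖ = ρ at this ⊢
    rw [this]
    simp only [L, LinearMap.add_apply, LinearMap.smulRight_apply, LinearMap.fst_apply,
      LinearMap.snd_apply, Prod.smul_mk, smul_eq_mul]
    module
  · ext <;> simp only [e, Prod.fst_sum, Prod.snd_sum, ← inner_sum, hsum, inner_zero_right,
      Prod.fst_zero, Prod.snd_zero]

end InnerProductSpace

lemma IsSimpleClosedPolygon.angle_lt_pi {k n : ℕ} {v : ZMod k → EuclideanSpace ℝ (Fin n)}
    (hv : IsSimpleClosedPolygon v) (i : ZMod k) :
    angle (v (i + 1) - v i) (v (i + 2) - v (i + 1)) < π := by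
  refine (angle_le_pi _ _).lt_of_ne fun hπ => ?_
  have h0 : EuclideanGeometry.angle (v i) (v (i + 1)) (v (i + 2)) = 0 := by
    rw [EuclideanGeometry.angle, vsub_eq_sub, vsub_eq_sub, ← neg_sub, angle_neg_left, hπ,
      sub_self]
  rcases EuclideanGeometry.angle_eq_zero_iff_ne_and_wbtw.1 h0 with ⟨hne, hb⟩ | ⟨hne, hb⟩
  · have : v i ∈ segment ℝ (v i) (v (i + 1)) ∩ segment ℝ (v (i + 1)) (v (i + 2)) :=
      ⟨left_mem_segment _ _ _, mem_segment_iff_wbtw.2 hb⟩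
    rw [hv.2.1 i] at this
    exact hne this
  · have : v (i + 2) ∈ segment ℝ (v i) (v (i + 1)) ∩ segment ℝ (v (i + 1)) (v (i + 2)) :=
      ⟨segment_symm ℝ (v i) _ ▸ mem_segment_iff_wbtw.2 hb, right_mem_segment _ _ _⟩
    rw [hv.2.1 i] at this
    exact hne this

theorem total_curvature_gamma5_lt_four_pi_general (n : ℕ)
    (v : ZMod 5 → EuclideanSpace ℝ (Fin n))
    (hsimple : IsSimpleClosedPolygon v) :
    ∑ i : ZMod 5, angle (v (i + 1) - v i) (v (i + 2) - v (i + 1)) < 4 * π := by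
  by_contra! h
  set E : ZMod 5 → EuclideanSpace ℝ (Fin n) := fun i => v (i + 1) - v i
  have hE_succ (i : ZMod 5) : E (i + 1) = v (i + 2) - v (i + 1) := by
    simp only [E, add_assoc, one_add_one_eq_two]
  have hsum : ∑ i, E i = 0 := by
    rw [sum_sub_distrib, sub_eq_zero]
    exact Equiv.sum_comp (Equiv.addRight 1) v
  obtain ⟨L, e, hL, he⟩ := exists_linearMap_isPentagramEdges E
    (fun i => sub_ne_zero.2 (hsimple.1 i)) hsum (fun i => hE_succ i ▸ hsimple.angle_lt_pi i)
    (by simpa only [hE_succ] using h)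
  obtain ⟨i, hi⟩ := he.exists_not_disjoint_segment L v fun i => hL i
  have hdisj := hsimple.2.2 i (i + 2) (by simp; decide) (by simp; decide)
    (by simp [add_assoc]; decide)
  rw [add_assoc, show (2 + 1 : ZMod 5) = 3 by norm_num] at hdisj
  exact hi hdisj

/-- The total curvature of a piecewise geodesic Jordan curve with 5 vertices in `ℝⁿ`
is strictly less than `4π`. -/
theorem total_curvature_gamma5_lt_four_pi (n : ℕ) (hn : 2 ≤ n)
    (v : ZMod 5 → EuclideanSpace ℝ (Fin n))
    (hsimple : IsSimpleClosedPolygon v) :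
    ∑ i : ZMod 5, angle (v (i + 1) - v i) (v (i + 2) - v (i + 1)) < 4 * π :=
  total_curvature_gamma5_lt_four_pi_general n v hsimple
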